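/- Let F_q be a finite field of odd cardinality. For monic polynomials A, B ∈ F_q[x] of positive degree with gcd(A,B)=1, quadratic reciprocity holds: (B/A) = (−1)^{((q−1)/2)·deg A · deg B} · (A/B). -/

import Mathlib

open Polynomial UniqueFactorizationMonoid Finset

noncomputable section
open scoped Classical

variable (F : Type) [Field F] [Fintype F] [DecidableEq F]

/-- The Möbius function of `F_q[x]`. -/
def polyMu (A : F[X]) : ℤ :=
  if Squarefree A then (-1) ^ Multiset.card (normalizedFactors A) else 0

/-- The quadratic residue symbol `(f/P)` for a monic prime `P`. -/
def legSym (f P : F[X]) : ℤ :=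
  if P ∣ f then 0 else if ∃ g : F[X], P ∣ (g ^ 2 - f) then 1 else -1

/-- The Jacobi symbol `(f/Q)` for monic `Q`. -/
def jacSym (f Q : F[X]) : ℤ :=
  ((normalizedFactors Q).map (legSym F f)).prod

/-- `A_D(β) = Σ_{B monic, deg B = β} (D/B)`. -/
def charSum (D : F[X]) (β : ℕ) : ℤ :=
  ∑ᶠ B ∈ {B : F[X] | B.Monic ∧ B.natDegree = β}, jacSym F D B

/-- `σ(f,α) = Σ_{A monic, deg A = α, gcd(A,f)=1} μ(A)`. -/
def sigmaMu (f : F[X]) (α : ℕ) : ℤ :=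
  ∑ᶠ A ∈ {A : F[X] | A.Monic ∧ A.natDegree = α ∧ IsCoprime A f}, polyMu F A

/-- The von Mangoldt function of `F_q[x]`. -/
def polyLambda (f : F[X]) : ℕ :=
  if (normalizedFactors f).toFinset.card = 1 then
    (normalizedFactors f).toFinset.sum natDegree else 0

/-! For a monic irreducible `P`, Euler's criterion in the field `F[x]/(P)` with `q ^ deg P`
elements gives `(f/P) = f ^ ((q ^ deg P - 1) / 2) = N(f) ^ ((q - 1) / 2)`, where `N` is the norm
to `F`, and this norm is the resultant `Res(P, f)`. As the resultant is multiplicative in its first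
argument, `(f/Q) = Res(Q, f) ^ ((q - 1) / 2)` in `F` for every monic `Q`, so reciprocity is the
symmetry `Res(A, B) = (-1) ^ (deg A * deg B) * Res(B, A)`. Both sides take values in `{0, 1, -1}`,
on which the cast `ℤ → F` is injective because `q` is odd. -/
theorem Polynomial.resultant_multiset_prod_left {R : Type*} [CommRing R] [IsDomain R]
    (m : Multiset R[X]) (hm : (0 : R[X]) ∉ m) (g : R[X]) :
    m.prod.resultant g = (m.map (·.resultant g)).prod := by
  induction m using Multiset.induction with
  | empty => simp
  | cons a s ih =>
    rw [Multiset.mem_cons, not_or] at hm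
    have hmul := resultant_mul_left a s.prod g g.natDegree le_rfl
    rw [← natDegree_mul (Ne.symm hm.1) (Multiset.prod_ne_zero hm.2)] at hmul
    rw [Multiset.prod_cons, Multiset.map_cons, Multiset.prod_cons, ← ih hm.2, hmul]

theorem AdjoinRoot.norm_mk_eq_resultant {K : Type*} [Field K] [PerfectField K] {P : K[X]}
    [Fact (Irreducible P)] (hP : P.Monic) (f : K[X]) :
    Algebra.norm K (AdjoinRoot.mk P f) = P.resultant f := by
  let E := AlgebraicClosure K
  have hP0 : P ≠ 0 := hP.ne_zero
  have : FiniteDimensional K (AdjoinRoot P) := (AdjoinRoot.powerBasis hP0).finite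
  have hnodup : (P.aroots E).Nodup :=
    nodup_roots (PerfectField.separable_of_irreducible Fact.out).map
  have hPd : (P.map (algebraMap K E)).natDegree = P.natDegree := natDegree_map _
  have hfd : (f.map (algebraMap K E)).natDegree = f.natDegree := natDegree_map _
  apply (algebraMap K E).injective
  rw [Algebra.norm_eq_prod_embeddings K E, ← resultant_map_map, ← hPd, ← hfd,
    resultant_eq_prod_eval _ _ _ le_rfl (IsAlgClosed.splits _), (hP.map _).leadingCoeff,
    one_pow, one_mul]
  rw [← Fintype.prod_equiv (AdjoinRoot.equiv E K P hP0).symm (fun x => aeval (x : E) f)]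
  · rw [Finset.prod_mem_multiset _ _ (fun x => eval x (f.map (algebraMap K E)))
      fun x => (eval_map_algebraMap f (x : E)).symm,
      Finset.prod_eq_multiset_prod, Multiset.toFinset_val, Multiset.dedup_eq_self.mpr hnodup]
  · intro x
    have hroot : (AdjoinRoot.equiv E K P hP0).symm x (root P) = x :=
      congrArg Subtype.val ((AdjoinRoot.equiv E K P hP0).apply_symm_apply x)
    rw [← AdjoinRoot.aeval_eq, ← aeval_algHom_apply, hroot]

theorem Nat.div_two_eq_div_mul_div_two {N q : ℕ} (hN : Odd N) (hq : Odd q) (h : q - 1 ∣ N - 1) :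
    N / 2 = (N - 1) / (q - 1) * ((q - 1) / 2) := by
  obtain ⟨c, hc⟩ := h
  obtain ⟨e, rfl⟩ := hq
  obtain ⟨k, rfl⟩ := hN
  simp only [Nat.add_sub_cancel] at hc ⊢
  rcases Nat.eq_zero_or_pos e with rfl | he
  · simp_all
  · rw [hc, Nat.mul_div_cancel_left c (by omega), Nat.mul_div_cancel_left e two_pos, mul_assoc,
      mul_comm c]
    omega

theorem ringChar_ne_two_of_odd_card {K : Type*} [Field K] [Fintype K] (h : Odd (Fintype.card K)) :
    ringChar K ≠ 2 :=
  mt FiniteField.even_card_iff_char_two.mp (Nat.odd_iff.mp h ▸ one_ne_zero)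

theorem legSym_eq_quadraticChar {K : Type} [Field K] {P : K[X]} [Fact (Irreducible P)]
    [Fintype (AdjoinRoot P)] (f : K[X]) :
    legSym K f P = quadraticChar (AdjoinRoot P) (AdjoinRoot.mk P f) := by
  have hsq : IsSquare (AdjoinRoot.mk P f) ↔ ∃ g : K[X], P ∣ g ^ 2 - f := by
    constructor
    · rintro ⟨r, hr⟩
      obtain ⟨g, rfl⟩ := AdjoinRoot.mk_surjective r
      exact ⟨g, AdjoinRoot.mk_eq_mk.mp (by rw [map_pow, sq, hr])⟩
    · rintro ⟨g, hg⟩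
      exact ⟨AdjoinRoot.mk P g, by rw [← map_mul, ← sq, AdjoinRoot.mk_eq_mk.mpr hg]⟩
  simp only [legSym, quadraticChar_apply, quadraticCharFun, AdjoinRoot.mk_eq_zero, hsq]

theorem legSym_cast_eq_resultant_pow {K : Type} [Field K] [Fintype K] (hq : Odd (Fintype.card K))
    {P : K[X]} (hP : Irreducible P) (hPm : P.Monic) (f : K[X]) :
    (legSym K f P : K) = P.resultant f ^ ((Fintype.card K - 1) / 2) := by
  have := Fact.mk hP
  let pb := AdjoinRoot.powerBasis hPm.ne_zero
  have := pb.finite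
  have := Module.finite_of_finite K (M := AdjoinRoot P)
  let := Fintype.ofFinite (AdjoinRoot P)
  have hcard : Fintype.card (AdjoinRoot P) = Fintype.card K ^ P.natDegree := by
    rw [Module.card_eq_pow_finrank (K := K), pb.finrank, AdjoinRoot.powerBasis_dim]
  have hodd : Odd (Fintype.card (AdjoinRoot P)) := hcard ▸ hq.pow
  apply (algebraMap K (AdjoinRoot P)).injective
  rw [map_intCast, legSym_eq_quadraticChar, quadraticChar_eq_pow_of_char_ne_two'
    (ringChar_ne_two_of_odd_card hodd), map_pow, ← AdjoinRoot.norm_mk_eq_resultant hPm,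
    FiniteField.algebraMap_norm_eq_pow, ← pow_mul, Nat.card_eq_fintype_card,
    Nat.card_eq_fintype_card, Nat.div_two_eq_div_mul_div_two hodd hq]
  exact hcard ▸ Nat.sub_one_dvd_pow_sub_one _ _

theorem jacSym_cast_eq_resultant_pow {K : Type} [Field K] [Fintype K] [DecidableEq K]
    (hq : Odd (Fintype.card K)) {Q : K[X]} (hQ : Q.Monic) (f : K[X]) :
    (jacSym K f Q : K) = Q.resultant f ^ ((Fintype.card K - 1) / 2) := by
  have hfactors : (normalizedFactors Q).prod = Q := by
    rw [prod_normalizedFactors_eq hQ.ne_zero, hQ.normalize_eq_self]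
  rw [jacSym, Int.cast_multiset_prod, Multiset.map_map]
  conv_rhs => rw [← hfactors, resultant_multiset_prod_left _ (zero_notMem_normalizedFactors _),
    ← Multiset.prod_map_pow]
  refine congrArg _ (Multiset.map_congr rfl fun P hP => ?_)
  obtain ⟨hPirr, hPm, -⟩ := (Polynomial.mem_normalizedFactors_iff hQ.ne_zero).mp hP
  exact legSym_cast_eq_resultant_pow hq hPirr hPm f

def signSubmonoid : Submonoid ℤ where
  carrier := {0, 1, -1}
  one_mem' := by simp
  mul_mem' := by rintro a b (rfl | rfl | rfl) (rfl | rfl | rfl) <;> simp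

theorem legSym_mem_signSubmonoid {K : Type} [Field K] (f P : K[X]) :
    legSym K f P ∈ signSubmonoid := by
  unfold legSym
  split_ifs <;> simp [signSubmonoid]

theorem jacSym_mem_signSubmonoid {K : Type} [Field K] [DecidableEq K] (f Q : K[X]) :
    jacSym K f Q ∈ signSubmonoid :=
  multiset_prod_mem _ fun _ hx => by
    obtain ⟨P, -, rfl⟩ := Multiset.mem_map.mp hx
    exact legSym_mem_signSubmonoid f P

theorem statement6 (hq : Odd (Fintype.card F)) (A B : F[X])
    (hA : A.Monic) (hB : B.Monic) :
    jacSym F B A =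
      (-1) ^ (((Fintype.card F - 1) / 2) * A.natDegree * B.natDegree) * jacSym F A B := by
  refine Int.cast_injOn_of_ringChar_ne_two (R := F) (ringChar_ne_two_of_odd_card hq)
    (jacSym_mem_signSubmonoid B A)
    (mul_mem (pow_mem (by simp [signSubmonoid]) _) (jacSym_mem_signSubmonoid A B)) ?_
  push_cast
  rw [jacSym_cast_eq_resultant_pow hq hA, jacSym_cast_eq_resultant_pow hq hB, resultant_comm,
    mul_pow, ← pow_mul]
  ring
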